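/- arXiv:0911.2529 — 3 statements merged into one kernel-verified Lean document; each statement's English description precedes it below -/
import Mathlib

section
/- Let F be a field of characteristic not 2, φ = ⟨1,a₁⟩⊗⋯⊗⟨1,aₙ⟩ an anisotropic n-fold Pfister form over F, and K = F(X₁,…,X_{2ⁿ}). Then the extended form φ_K is isometric to φ(X₁,…,X_{2ⁿ})·φ_K, i.e., the generic value of φ is a similarity factor of φ_K. -/
/-!
Pfister forms are round: every nonzero value `c` of `φ` is a similarity factor of `φ`. Induct on
`φₙ₊₁ = φₙ ⊥ a φₙ` and write `c = s + a d` with `s`, `d` values of `φₙ`. If `a d = 0` then `c = s`;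
if `s = 0` then `c` is the product of the similarity factors `a` (swap the two halves) and `d`;
otherwise the similarities of `φₙ` by `s` and `d` combine with the binary isometry
`⟨s, b⟩ ≅ (s + b)⟨1, sb⟩`, `b = a d`. Finally, the generic value `φ(X)` is nonzero, since
specialising `X` to the first basis vector gives `1`.
-/

/-- `pfisterVal a i v` is the value of the `i`-fold Pfister form
`⟨1, a 1⟩⊗⋯⊗⟨1, a i⟩` at the vector `(v 0, …, v (2^i − 1))`. -/
def pfisterVal {K : Type*} [Field K] (a : ℕ → K) : ℕ → (ℕ → K) → K
  | 0, v => v 0 ^ 2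
  | (i + 1), v => pfisterVal a i v + a (i + 1) * pfisterVal a i (fun j => v (2 ^ i + j))

namespace QuadraticMap

section CommRing
variable {R M M' : Type*} [CommRing R] [AddCommGroup M] [Module R M] [AddCommGroup M'] [Module R M']

def IsSimilarityFactor (Q : QuadraticForm R M) (c : R) : Prop :=
  ∃ T : M ≃ₗ[R] M, ∀ v, Q (T v) = c * Q v

def IsRound (Q : QuadraticForm R M) : Prop :=
  ∀ x, Q x ≠ 0 → Q.IsSimilarityFactor (Q x)

variable {Q : QuadraticForm R M}

theorem IsSimilarityFactor.mul {c d : R} (hc : Q.IsSimilarityFactor c)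
    (hd : Q.IsSimilarityFactor d) : Q.IsSimilarityFactor (c * d) := by
  obtain ⟨S, hS⟩ := hc
  obtain ⟨T, hT⟩ := hd
  exact ⟨T.trans S, fun v => by simp [hS, hT, mul_assoc]⟩

theorem IsSimilarityFactor.comp {c : R} (hc : Q.IsSimilarityFactor c) (e : M' ≃ₗ[R] M) :
    (Q.comp (e : M' →ₗ[R] M)).IsSimilarityFactor c := by
  obtain ⟨T, hT⟩ := hc
  exact ⟨e.trans (T.trans e.symm), fun v => by simp [hT]⟩

theorem IsRound.comp (hQ : Q.IsRound) (e : M' ≃ₗ[R] M) :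
    (Q.comp (e : M' →ₗ[R] M)).IsRound :=
  fun x hx => (hQ (e x) hx).comp e

theorem IsSimilarityFactor.prod_smul {c : R} (hc : Q.IsSimilarityFactor c) (a : R) :
    (Q.prod (a • Q)).IsSimilarityFactor c := by
  obtain ⟨T, hT⟩ := hc
  exact ⟨T.prodCongr T, fun v => by
    simp only [LinearEquiv.prodCongr_apply, prod_apply, smul_apply, smul_eq_mul, hT]; ring⟩

theorem map_add_smul (x y : M) (t : R) :
    Q (x + t • y) = Q x + t ^ 2 * Q y + t * polar Q x y := by
  rw [QuadraticMap.map_add (⇑Q), QuadraticMap.map_smul, polar_smul_right, smul_eq_mul,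
    smul_eq_mul]
  ring

end CommRing

section Field
variable {K M : Type*} [Field K] [AddCommGroup M] [Module K M] {Q : QuadraticForm K M}

theorem isSimilarityFactor_sq {t : K} (ht : t ≠ 0) : Q.IsSimilarityFactor (t ^ 2) :=
  ⟨LinearEquiv.smulOfNeZero K M t ht, fun v => by
    rw [LinearEquiv.smulOfNeZero_apply, QuadraticMap.map_smul, smul_eq_mul, pow_two]⟩

theorem isSimilarityFactor_prod_smul_self {a : K} (ha : a ≠ 0) :
    (Q.prod (a • Q)).IsSimilarityFactor a :=
  ⟨(LinearEquiv.prodComm K M M).trans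
      ((LinearEquiv.smulOfNeZero K M a ha).prodCongr (LinearEquiv.refl K M)),
    fun ⟨x, y⟩ => by
      simp only [LinearEquiv.trans_apply, LinearEquiv.prodComm_apply, Prod.swap_prod_mk,
        LinearEquiv.prodCongr_apply, LinearEquiv.smulOfNeZero_apply, LinearEquiv.refl_apply,
        prod_apply, smul_apply, QuadraticMap.map_smul, smul_eq_mul]
      ring⟩

def binaryEquiv (s b : K) (hsb : s + b ≠ 0) : (M × M) ≃ₗ[K] (M × M) :=
  LinearEquiv.ofLinearMap
    ((LinearMap.fst K M M + b • LinearMap.snd K M M).prod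
      (LinearMap.fst K M M - s • LinearMap.snd K M M))
    ((s + b)⁻¹ • (s • LinearMap.fst K M M + b • LinearMap.snd K M M).prod
      (LinearMap.fst K M M - LinearMap.snd K M M))
    (by ext <;> simp <;> match_scalars <;> field_simp <;> ring)
    (by ext <;> simp <;> match_scalars <;> field_simp <;> ring)

@[simp] theorem binaryEquiv_apply (s b : K) (hsb : s + b ≠ 0) (x y : M) :
    binaryEquiv s b hsb (x, y) = (x + b • y, x - s • y) := rfl

/-- The similarity is `(x, S (D w)) ↦ (S (x + b • w), D (x - s • w))` with `b = a * d`: the binary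
isometry `⟨s, b⟩ ≅ (s + b)⟨1, sb⟩` tensored with `Q`. -/
theorem IsSimilarityFactor.prod_smul_add {s d : K} (hs : Q.IsSimilarityFactor s)
    (hd : Q.IsSimilarityFactor d) (a : K) (hc : s + a * d ≠ 0) :
    (Q.prod (a • Q)).IsSimilarityFactor (s + a * d) := by
  obtain ⟨S, hS⟩ := hs
  obtain ⟨D, hD⟩ := hd
  refine ⟨((LinearEquiv.refl K M).prodCongr (D.trans S).symm).trans
    ((binaryEquiv s (a * d) hc).trans (S.prodCongr D)), fun ⟨x, y⟩ => ?_⟩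
  obtain ⟨w, rfl⟩ : ∃ w, y = D.trans S w := ⟨_, ((D.trans S).apply_symm_apply y).symm⟩
  have hsub : x - s • w = x + (-s) • w := by rw [neg_smul, sub_eq_add_neg]
  rw [LinearEquiv.trans_apply, LinearEquiv.prodCongr_apply, LinearEquiv.symm_apply_apply]
  simp only [LinearEquiv.trans_apply, LinearEquiv.prodCongr_apply, LinearEquiv.refl_apply,
    binaryEquiv_apply, prod_apply, smul_apply, smul_eq_mul, hS, hD, hsub, map_add_smul]
  ring

theorem IsRound.prod_smul (hQ : Q.IsRound) (a : K) : (Q.prod (a • Q)).IsRound := by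
  rintro ⟨x, y⟩ hxy
  simp only [prod_apply, smul_apply, smul_eq_mul] at hxy ⊢
  by_cases hy : a * Q y = 0
  · rw [hy, add_zero] at hxy ⊢
    exact (hQ x hxy).prod_smul a
  have hQy := hQ y (right_ne_zero_of_mul hy)
  by_cases hx : Q x = 0
  · rw [hx, zero_add]
    exact (isSimilarityFactor_prod_smul_self (left_ne_zero_of_mul hy)).mul (hQy.prod_smul a)
  · exact (hQ x hx).prod_smul_add hQy a hxy

end Field
end QuadraticMap

section Pfister

open QuadraticMap

variable (R : Type*) [CommRing R]

def finTwoPowSuccEquiv (n : ℕ) :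
    (Fin (2 ^ (n + 1)) → R) ≃ₗ[R] (Fin (2 ^ n) → R) × (Fin (2 ^ n) → R) :=
  (LinearEquiv.funCongrLeft R R (finSumFinEquiv.trans (finCongr (Nat.two_pow_succ n).symm))).trans
    (LinearEquiv.sumArrowLequivProdArrow _ _ R R)

variable {R}

@[simp] theorem finTwoPowSuccEquiv_apply_fst (n : ℕ) (v : Fin (2 ^ (n + 1)) → R)
    (j : Fin (2 ^ n)) : (finTwoPowSuccEquiv R n v).1 j = v ⟨j, by grind⟩ := rfl

@[simp] theorem finTwoPowSuccEquiv_apply_snd (n : ℕ) (v : Fin (2 ^ (n + 1)) → R)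
    (j : Fin (2 ^ n)) : (finTwoPowSuccEquiv R n v).2 j = v ⟨2 ^ n + j, by grind⟩ := rfl

def pfisterForm (a : ℕ → R) : (n : ℕ) → QuadraticForm R (Fin (2 ^ n) → R)
  | 0 => QuadraticMap.proj 0 0
  | n + 1 => ((pfisterForm a n).prod (a (n + 1) • pfisterForm a n)).comp
      (finTwoPowSuccEquiv R n : (Fin (2 ^ (n + 1)) → R) →ₗ[R] _)

theorem pfisterForm_zero_apply (a : ℕ → R) (v : Fin (2 ^ 0) → R) :
    pfisterForm a 0 v = v 0 ^ 2 := by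
  rw [pfisterForm, proj_apply, pow_two]

theorem pfisterForm_succ_apply (a : ℕ → R) (n : ℕ) (v : Fin (2 ^ (n + 1)) → R) :
    pfisterForm a (n + 1) v = pfisterForm a n (finTwoPowSuccEquiv R n v).1 +
      a (n + 1) * pfisterForm a n (finTwoPowSuccEquiv R n v).2 := rfl

theorem pfisterForm_map {S : Type*} [CommRing S] (f : R →+* S) (a : ℕ → R) (n : ℕ)
    (v : Fin (2 ^ n) → R) : pfisterForm (f ∘ a) n (f ∘ v) = f (pfisterForm a n v) := by
  induction n with
  | zero => rw [pfisterForm_zero_apply, pfisterForm_zero_apply, map_pow, Function.comp_apply]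
  | succ n ih =>
    rw [pfisterForm_succ_apply, pfisterForm_succ_apply, map_add, map_mul, ← ih, ← ih]
    rfl

theorem pfisterForm_single_zero (a : ℕ → R) (n : ℕ) :
    pfisterForm a n (Pi.single 0 1) = 1 := by
  induction n with
  | zero => rw [pfisterForm_zero_apply, Pi.single_eq_same, one_pow]
  | succ n ih =>
    have h1 : (finTwoPowSuccEquiv R n (Pi.single 0 1)).1 = Pi.single 0 1 := by
      ext j
      simp only [finTwoPowSuccEquiv_apply_fst, Pi.single_apply, Fin.ext_iff, Fin.val_zero]
    have h2 : (finTwoPowSuccEquiv R n (Pi.single 0 1)).2 = 0 := by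
      ext j
      exact Pi.single_eq_of_ne (fun h => by simpa using congrArg Fin.val h) 1
    rw [pfisterForm_succ_apply, h1, h2, ih, QuadraticMap.map_zero, mul_zero, add_zero]

theorem pfisterForm_eq_pfisterVal {K : Type*} [Field K] (a : ℕ → K) (n : ℕ)
    (v : Fin (2 ^ n) → K) (x : ℕ → K) (hx : ∀ j : Fin (2 ^ n), x j = v j) :
    pfisterForm a n v = pfisterVal a n x := by
  induction n generalizing x with
  | zero => rw [pfisterForm_zero_apply, pfisterVal, ← hx 0]; rfl
  | succ n ih =>
    rw [pfisterForm_succ_apply, pfisterVal,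
      ih (finTwoPowSuccEquiv K n v).1 x fun j => hx ⟨j, by grind⟩,
      ih (finTwoPowSuccEquiv K n v).2 (fun j => x (2 ^ n + j))
        fun j => hx ⟨2 ^ n + j, by grind⟩]

theorem isRound_pfisterForm {K : Type*} [Field K] (a : ℕ → K) (n : ℕ) :
    (pfisterForm a n).IsRound := by
  induction n with
  | zero =>
    intro x hx
    rw [pfisterForm_zero_apply] at hx ⊢
    exact isSimilarityFactor_sq (pow_ne_zero_iff two_ne_zero |>.mp hx)
  | succ n ih => exact (ih.prod_smul (a (n + 1))).comp _

theorem pfisterForm_C_X_ne_zero [Nontrivial R] (a : ℕ → R) (n : ℕ) :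
    pfisterForm (MvPolynomial.C ∘ a) n MvPolynomial.X ≠ 0 := by
  intro h
  let e : Fin (2 ^ n) → R := Pi.single 0 1
  have key := pfisterForm_map (MvPolynomial.eval e) (MvPolynomial.C ∘ a) n MvPolynomial.X
  have hC : MvPolynomial.eval e ∘ (MvPolynomial.C ∘ a) = a := by
    funext i
    exact MvPolynomial.eval_C _
  have hX : MvPolynomial.eval e ∘ MvPolynomial.X = e := by
    funext i
    exact MvPolynomial.eval_X _
  rw [hC, hX, pfisterForm_single_zero, h, map_zero] at key
  exact one_ne_zero key

end Pfister

theorem stmt_8_general (F : Type*) [Field F]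
    (n : ℕ) (a : ℕ → F) :
    let K := FractionRing (MvPolynomial (Fin (2 ^ n)) F)
    let A : ℕ → K := fun i => algebraMap F K (a i)
    let φK : (Fin (2 ^ n) → K) → K := fun v =>
      pfisterVal A n (fun j => if h : j < 2 ^ n then v ⟨j, h⟩ else 0)
    let X : Fin (2 ^ n) → K := fun i =>
      algebraMap (MvPolynomial (Fin (2 ^ n)) F) K (MvPolynomial.X i)
    ∃ T : (Fin (2 ^ n) → K) ≃ₗ[K] (Fin (2 ^ n) → K),
      ∀ v : Fin (2 ^ n) → K, φK (T v) = φK X * φK v := by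
  intro K A φK X
  have hφK (v : Fin (2 ^ n) → K) : φK v = pfisterForm A n v :=
    (pfisterForm_eq_pfisterVal A n v _ fun j => by simp).symm
  have hA : A = algebraMap (MvPolynomial (Fin (2 ^ n)) F) K ∘ (MvPolynomial.C ∘ a) := by
    funext i
    exact IsScalarTower.algebraMap_apply F (MvPolynomial (Fin (2 ^ n)) F) K (a i)
  have hX : pfisterForm A n X ≠ 0 := by
    rw [hA, show X = algebraMap _ K ∘ MvPolynomial.X from rfl, pfisterForm_map]
    exact (map_ne_zero_iff _ (IsFractionRing.injective _ K)).mpr (pfisterForm_C_X_ne_zero a n)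
  obtain ⟨T, hT⟩ := isRound_pfisterForm A n X hX
  exact ⟨T, fun v => by rw [hφK, hφK, hφK, hT]⟩

/-- Pfister's theorem: if `φ = ⟨1,a₁⟩⊗⋯⊗⟨1,aₙ⟩` is an anisotropic `n`-fold Pfister form
over `F` and `K = F(X₁,…,X_{2ⁿ})`, then `φ_K` is isometric to `φ(X₁,…,X_{2ⁿ})·φ_K`:
there is a `K`-linear automorphism `T` of `K^{2ⁿ}` with
`φ_K(T v) = φ(X₁,…,X_{2ⁿ})·φ_K(v)` for all `v`. -/
theorem stmt_8 (F : Type*) [Field F] (h2 : (1 : F) + 1 ≠ 0)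
    (n : ℕ) (a : ℕ → F) (ha : ∀ i, 1 ≤ i → i ≤ n → a i ≠ 0)
    (haniso : ∀ v : Fin (2 ^ n) → F,
      pfisterVal a n (fun j => if h : j < 2 ^ n then v ⟨j, h⟩ else 0) = 0 → v = 0) :
    let K := FractionRing (MvPolynomial (Fin (2 ^ n)) F)
    let A : ℕ → K := fun i => algebraMap F K (a i)
    let φK : (Fin (2 ^ n) → K) → K := fun v =>
      pfisterVal A n (fun j => if h : j < 2 ^ n then v ⟨j, h⟩ else 0)
    let X : Fin (2 ^ n) → K := fun i =>
      algebraMap (MvPolynomial (Fin (2 ^ n)) F) K (MvPolynomial.X i)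
    ∃ T : (Fin (2 ^ n) → K) ≃ₗ[K] (Fin (2 ^ n) → K),
      ∀ v : Fin (2 ^ n) → K, φK (T v) = φK X * φK v :=
  stmt_8_general F n a
end

section
/- Let F be a field of characteristic not 2 and let φ be a quadratic form of dimension m over F. Suppose that over K = F(X₁,…,Xₘ) there exists a K-linear map T : K^m → K^m with φ(T(Y)) = φ(X₁,…,Xₘ)·φ(Y) for all Y ∈ K^m. Then φ is strictly multiplicative: for every field extension E/F and all u, v ∈ E^m there exists w ∈ E^m with φ(u)·φ(v) = φ(w). -/
open Matrix

/-- The value of the quadratic form with (symmetric) Gram matrix `M` at `v`, with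
coefficients transported along the ring homomorphism `f`. -/
def formVal {F E : Type*} [CommRing F] [CommRing E] (f : F →+* E) {m : ℕ}
    (M : Matrix (Fin m) (Fin m) F) (v : Fin m → E) : E :=
  v ⬝ᵥ (M.map f).mulVec v

/-!
Writing `T` as a matrix and clearing denominators gives `d ≠ 0` and a matrix `N` over
`F[X₁,…,Xₘ]` with `Nᵀ M N = d² φ(X) M`, i.e. a similitude of `φ` with multiplier `d² φ(X)`.

If `φ` is isotropic over `E` it is universal, being nondegenerate. Otherwise pass to the infinite
field `L = E(s)`, over which `φ` stays anisotropic, and restrict `N` to a line `u + t (z - u)`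
on which `d` does not vanish identically: `N(u + t (z - u)) v` is a vector over `L[t]` with value
`d(u + t (z - u))² φ(u + t (z - u)) φ(v)`. For an anisotropic form the `t`-adic order of a value
is twice that of the vector, so the powers of `t` dividing `d` cancel and `t = 0` yields a vector
over `L` with value `φ(u) φ(v)`. The same argument in the variable `s` brings it down to `E`.
-/

open QuadraticMap

lemma formVal_eq_toQuadraticForm' {F E : Type*} [CommRing F] [CommRing E] (f : F →+* E) {m : ℕ}
    (M : Matrix (Fin m) (Fin m) F) (v : Fin m → E) :
    formVal f M v = (M.map f).toQuadraticForm' v :=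
  (toLinearMap₂'_apply' _ v v).symm

namespace Matrix

section Similitude

variable {R S : Type*} [CommRing R] [CommRing S] {n : Type*} [Fintype n]

def IsSimilitude (A N : Matrix n n R) (c : R) : Prop :=
  Nᵀ * A * N = c • A

variable {A N : Matrix n n R} {c : R}

lemma IsSimilitude.map (h : A.IsSimilitude N c) (f : R →+* S) :
    (A.map f).IsSimilitude (N.map f) (f c) := by
  rw [IsSimilitude, ← transpose_map, ← Matrix.map_mul, ← Matrix.map_mul, h]
  ext i j
  simp only [map_apply, smul_apply, smul_eq_mul, map_mul]

lemma exists_isSimilitude_of_isFractionRing {K : Type*} [IsDomain R] [Field K] [Algebra R K]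
    [IsFractionRing R K] {B : Matrix n n K}
    (h : (A.map (algebraMap R K)).IsSimilitude B (algebraMap R K c)) :
    ∃ d : R, d ≠ 0 ∧ ∃ N : Matrix n n R, A.IsSimilitude N (d ^ 2 * c) := by
  obtain ⟨d, hd⟩ := IsLocalization.exist_integer_multiples_of_finite (nonZeroDivisors R)
    fun p : n × n => B p.1 p.2
  choose N hN using hd
  refine ⟨d, nonZeroDivisors.coe_ne_zero d, of fun i j => N (i, j), ?_⟩
  have hNB : (of fun i j => N (i, j)).map (algebraMap R K) = algebraMap R K d • B := by
    ext i j
    rw [map_apply, of_apply, hN, smul_apply, smul_eq_mul, Algebra.smul_def]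
  unfold IsSimilitude at h ⊢
  refine map_injective (IsFractionRing.injective R K) ?_
  dsimp only
  rw [Matrix.map_mul, Matrix.map_mul, transpose_map, hNB]
  simp only [transpose_smul, Matrix.smul_mul, Matrix.mul_smul, h]
  ext i j
  simp only [map_apply, smul_apply, smul_eq_mul, map_mul, map_pow]
  ring

variable [DecidableEq n]

lemma toQuadraticForm'_apply (A : Matrix n n R) (v : n → R) :
    A.toQuadraticForm' v = v ⬝ᵥ A *ᵥ v :=
  toLinearMap₂'_apply' A v v

lemma toQuadraticForm'_smul_apply (c : R) (A : Matrix n n R) (v : n → R) :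
    (c • A).toQuadraticForm' v = c * A.toQuadraticForm' v := by
  simp only [toQuadraticForm'_apply, smul_mulVec, dotProduct_smul, smul_eq_mul]

lemma toQuadraticForm'_mulVec (A B : Matrix n n R) (v : n → R) :
    A.toQuadraticForm' (B *ᵥ v) = (Bᵀ * A * B).toQuadraticForm' v := by
  simp only [toQuadraticForm'_apply, dotProduct_mulVec, ← mulVec_mulVec, vecMul_transpose]

lemma _root_.RingHom.map_toQuadraticForm' (f : R →+* S) (A : Matrix n n R) (v : n → R) :
    f (A.toQuadraticForm' v) = (A.map f).toQuadraticForm' (f ∘ v) := by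
  simp only [toQuadraticForm'_apply, dotProduct, mulVec, map_sum, map_mul, map_apply,
    Function.comp_apply]

lemma IsSimilitude.toQuadraticForm'_mulVec (h : A.IsSimilitude N c) (v : n → R) :
    A.toQuadraticForm' (N *ᵥ v) = c * A.toQuadraticForm' v := by
  rw [Matrix.toQuadraticForm'_mulVec, h, toQuadraticForm'_smul_apply]

lemma IsSymm.eq_of_toQuadraticForm'_eq [Invertible (2 : R)] {B : Matrix n n R} (hA : A.IsSymm)
    (hB : B.IsSymm) (h : A.toQuadraticForm' = B.toQuadraticForm') : A = B := by
  have associated_eq : ∀ C : Matrix n n R, C.IsSymm →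
      associatedHom (M := n → R) (N := R) R C.toQuadraticForm' = toLinearMap₂' R C :=
    fun C hC => associated_left_inverse R fun x y => by
      simp only [toLinearMap₂'_apply']
      rw [dotProduct_mulVec, ← mulVec_transpose, hC.eq, dotProduct_comm]
  apply (toLinearMap₂' R (S₁ := R) (S₂ := R)).injective
  rw [← associated_eq A hA, ← associated_eq B hB, h]

lemma IsSymm.isSimilitude_toMatrix' [Invertible (2 : R)] (hA : A.IsSymm)
    {T : (n → R) →ₗ[R] n → R} (hT : ∀ v, A.toQuadraticForm' (T v) = c * A.toQuadraticForm' v) :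
    A.IsSimilitude (LinearMap.toMatrix' T) c := by
  refine IsSymm.eq_of_toQuadraticForm'_eq ?_ (hA.smul c) (QuadraticMap.ext fun v => ?_)
  · simp only [IsSymm, transpose_mul, transpose_transpose, hA.eq, Matrix.mul_assoc]
  · rw [← Matrix.toQuadraticForm'_mulVec, toQuadraticForm'_smul_apply, ← hT, ← toLin'_apply,
      toLin'_toMatrix']

lemma IsSymm.exists_isSimilitude_of_linearMap {K : Type*} [IsDomain R] [Field K] [Algebra R K]
    [IsFractionRing R K] (h2 : (2 : K) ≠ 0) (hA : A.IsSymm) (T : (n → K) →ₗ[K] n → K)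
    (hT : ∀ v, (A.map (algebraMap R K)).toQuadraticForm' (T v) =
      algebraMap R K c * (A.map (algebraMap R K)).toQuadraticForm' v) :
    ∃ d : R, d ≠ 0 ∧ ∃ N : Matrix n n R, A.IsSimilitude N (d ^ 2 * c) :=
  have : Invertible (2 : K) := invertibleOfNonzero h2
  exists_isSimilitude_of_isFractionRing ((hA.map _).isSimilitude_toMatrix' hT)

end Similitude

end Matrix

lemma QuadraticMap.surjective_of_polar_ne_zero {K V : Type*} [Field K] [AddCommGroup V]
    [Module K V] (Q : QuadraticForm K V) {x y : V} (hx : Q x = 0) (hxy : polar Q x y ≠ 0) :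
    Function.Surjective Q := by
  intro c
  refine ⟨((c - Q y) / polar Q x y) • x + y, ?_⟩
  rw [QuadraticMap.map_add (⇑Q), QuadraticMap.map_smul, hx, polar_smul_left, smul_eq_mul,
    smul_eq_mul]
  field_simp
  ring

namespace Matrix

section Field

variable {E : Type*} [Field E] {n : Type*} [Fintype n] [DecidableEq n] {A : Matrix n n E}

lemma IsSymm.toQuadraticForm'_surjective (h2 : (2 : E) ≠ 0) (hA : A.IsSymm) (hdet : A.det ≠ 0)
    (hiso : ¬ A.toQuadraticForm'.Anisotropic) : Function.Surjective A.toQuadraticForm' := by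
  obtain ⟨x, hx0, hx⟩ := (not_anisotropic_iff_exists _).mp hiso
  obtain ⟨y, hy⟩ : ∃ y, A *ᵥ x ⬝ᵥ y ≠ 0 := by
    by_contra! h
    exact hx0 (eq_zero_of_mulVec_eq_zero hdet (dotProduct_eq_zero_iff.mp h))
  refine A.toQuadraticForm'.surjective_of_polar_ne_zero hx (y := y) ?_
  rw [toQuadraticForm', LinearMap.BilinMap.polar_toQuadraticMap, toLinearMap₂'_apply',
    toLinearMap₂'_apply', dotProduct_mulVec, ← mulVec_transpose, hA.eq, dotProduct_comm y,
    ← two_mul]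
  exact mul_ne_zero h2 hy

open Polynomial

lemma eval_toQuadraticForm'_map_C (A : Matrix n n E) (f : n → E[X]) (x : E) :
    ((A.map C).toQuadraticForm' f).eval x = A.toQuadraticForm' fun i => (f i).eval x := by
  rw [← coe_evalRingHom, RingHom.map_toQuadraticForm', map_map]
  congr
  ext a
  simp

lemma exists_eq_X_pow_smul_of_toQuadraticForm'_map_C_eq (hA : A.toQuadraticForm'.Anisotropic)
    (j : ℕ) {f : n → E[X]} {r : E[X]} (h : (A.map C).toQuadraticForm' f = X ^ (2 * j) * r) :
    ∃ g : n → E[X], f = (X : E[X]) ^ j • g ∧ (A.map C).toQuadraticForm' g = r := by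
  induction j generalizing f with
  | zero => exact ⟨f, by simp, by simpa using h⟩
  | succ j ih =>
    have hf0 : (fun i => (f i).eval 0) = 0 :=
      hA _ (by rw [← eval_toQuadraticForm'_map_C, h]; simp)
    have hfX : f = (X : E[X]) • fun i => (f i).divX := by
      ext1 i
      conv_lhs => rw [← X_mul_divX_add (f i), coeff_zero_eq_eval_zero, congrFun hf0 i]
      simp
    have h' : (X * X) * (A.map C).toQuadraticForm' (fun i => (f i).divX) =
        (X * X) * (X ^ (2 * j) * r) := by
      rw [← smul_eq_mul, ← QuadraticMap.map_smul, ← hfX, h]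
      ring
    obtain ⟨g, hg, hgr⟩ := ih (mul_left_cancel₀ (mul_ne_zero X_ne_zero X_ne_zero) h')
    refine ⟨g, ?_, hgr⟩
    rw [hfX, hg, smul_smul, pow_succ']

lemma anisotropic_toQuadraticForm'_map_C (hA : A.toQuadraticForm'.Anisotropic) :
    (A.map C).toQuadraticForm'.Anisotropic := by
  intro f hf
  by_contra! hne
  obtain ⟨i, hi⟩ := Function.ne_iff.mp hne
  obtain ⟨g, hfg, -⟩ := exists_eq_X_pow_smul_of_toQuadraticForm'_map_C_eq hA ((f i).natDegree + 1)
    (r := 0) (by rw [hf, mul_zero])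
  have := natDegree_le_of_dvd ⟨g i, congrFun hfg i⟩ hi
  rw [natDegree_X_pow] at this
  omega

lemma exists_toQuadraticForm'_eq_eval_zero (hA : A.toQuadraticForm'.Anisotropic) {f : n → E[X]}
    {g p : E[X]} (hg : g ≠ 0) (h : (A.map C).toQuadraticForm' f = g ^ 2 * p) :
    ∃ z, A.toQuadraticForm' z = p.eval 0 := by
  obtain ⟨g', hgg', hg'⟩ := exists_eq_pow_rootMultiplicity_mul_and_not_dvd g hg 0
  set k := g.rootMultiplicity 0
  rw [map_zero, sub_zero, X_dvd_iff, coeff_zero_eq_eval_zero] at hg'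
  rw [map_zero, sub_zero] at hgg'
  obtain ⟨f', -, hf'⟩ := exists_eq_X_pow_smul_of_toQuadraticForm'_map_C_eq hA k
    (r := g' ^ 2 * p) (by rw [h, hgg']; ring)
  refine ⟨(g'.eval 0)⁻¹ • fun i => (f' i).eval 0, ?_⟩
  rw [QuadraticMap.map_smul, ← eval_toQuadraticForm'_map_C, hf', smul_eq_mul, eval_mul, eval_pow]
  field_simp

lemma exists_toQuadraticForm'_map_C_eq_sq_mul (A : Matrix n n E) (w : n → RatFunc E) :
    ∃ g : E[X], g ≠ 0 ∧ ∃ f : n → E[X],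
      (fun i => algebraMap E[X] (RatFunc E) (f i)) = algebraMap E[X] (RatFunc E) g • w ∧
      algebraMap E[X] (RatFunc E) ((A.map C).toQuadraticForm' f) =
        algebraMap E[X] (RatFunc E) g ^ 2 *
          (A.map (algebraMap E (RatFunc E))).toQuadraticForm' w := by
  obtain ⟨g, hg⟩ := IsLocalization.exist_integer_multiples_of_finite (nonZeroDivisors E[X]) w
  choose f hf using hg
  have hfw : (fun i => algebraMap E[X] (RatFunc E) (f i)) = algebraMap E[X] (RatFunc E) g • w := by
    ext1 i
    rw [hf, Pi.smul_apply, Algebra.smul_def, smul_eq_mul]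
  refine ⟨g, nonZeroDivisors.coe_ne_zero g, f, hfw, ?_⟩
  rw [RingHom.map_toQuadraticForm', map_map, ← RingHom.coe_comp, ← algebraMap_eq,
    ← IsScalarTower.algebraMap_eq, Function.comp_def, hfw, QuadraticMap.map_smul, smul_eq_mul,
    _root_.sq]

lemma anisotropic_toQuadraticForm'_map_ratFunc (hA : A.toQuadraticForm'.Anisotropic) :
    (A.map (algebraMap E (RatFunc E))).toQuadraticForm'.Anisotropic := by
  intro w hw
  obtain ⟨g, hg, f, hfw, hf⟩ := exists_toQuadraticForm'_map_C_eq_sq_mul A w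
  rw [hw, mul_zero, ← map_zero (algebraMap E[X] (RatFunc E)),
    (IsFractionRing.injective E[X] (RatFunc E)).eq_iff] at hf
  rw [anisotropic_toQuadraticForm'_map_C hA f hf, eq_comm] at hfw
  simp only [Pi.zero_apply, map_zero] at hfw
  exact (smul_eq_zero.mp hfw).resolve_left
    ((map_ne_zero_iff _ (IsFractionRing.injective E[X] (RatFunc E))).mpr hg)

lemma exists_toQuadraticForm'_eq_of_map_ratFunc (hA : A.toQuadraticForm'.Anisotropic)
    {w : n → RatFunc E} {c : E}
    (h : (A.map (algebraMap E (RatFunc E))).toQuadraticForm' w = algebraMap E (RatFunc E) c) :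
    ∃ z, A.toQuadraticForm' z = c := by
  obtain ⟨g, hg, f, -, hf⟩ := exists_toQuadraticForm'_map_C_eq_sq_mul A w
  rw [h, IsScalarTower.algebraMap_apply E E[X] (RatFunc E), ← map_pow, ← map_mul,
    (IsFractionRing.injective E[X] (RatFunc E)).eq_iff] at hf
  simpa using exists_toQuadraticForm'_eq_eval_zero hA hg hf

end Field

section Specialization

open Polynomial

variable {F : Type*} [Field F] {n σ : Type*} [Fintype n] [DecidableEq n]

lemma aeval_toQuadraticForm'_X {L : Type*} [CommRing L] [Algebra F L] [Fintype σ] [DecidableEq σ]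
    (M : Matrix σ σ F) (u : σ → L) :
    MvPolynomial.aeval u ((M.map (algebraMap F (MvPolynomial σ F))).toQuadraticForm'
      MvPolynomial.X) = (M.map (algebraMap F L)).toQuadraticForm' u := by
  rw [← AlgHom.coe_toRingHom, RingHom.map_toQuadraticForm', map_map]
  congr
  · ext a
    simp
  · ext i
    simp

variable {M : Matrix n n F} {N : Matrix n n (MvPolynomial σ F)} {d c : MvPolynomial σ F}

lemma exists_toQuadraticForm'_eq_aeval_mul_of_infinite {L : Type*} [Field L] [Algebra F L]
    [Infinite L] (hM : (M.map (algebraMap F L)).toQuadraticForm'.Anisotropic) (hd : d ≠ 0)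
    (hN : (M.map (algebraMap F (MvPolynomial σ F))).IsSimilitude N (d ^ 2 * c))
    (u : σ → L) (v : n → L) :
    ∃ w, (M.map (algebraMap F L)).toQuadraticForm' w =
      MvPolynomial.aeval u c * (M.map (algebraMap F L)).toQuadraticForm' v := by
  obtain ⟨z, hz⟩ : ∃ z : σ → L, MvPolynomial.aeval z d ≠ 0 := by
    by_contra! h
    refine hd (MvPolynomial.map_injective _ (algebraMap F L).injective ?_)
    exact MvPolynomial.funext fun x => by simp [MvPolynomial.eval_map, ← MvPolynomial.aeval_def, h]
  set θ : MvPolynomial σ F →ₐ[F] L[X] :=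
    MvPolynomial.aeval fun i => C (u i) + X * C (z i - u i)
  have eval_θ : ∀ (t : L) (p : MvPolynomial σ F),
      (θ p).eval t = MvPolynomial.aeval (fun i => u i + t * (z i - u i)) p := by
    intro t p
    induction p using MvPolynomial.induction_on <;> simp_all [θ]
  have hθd : θ d ≠ 0 := fun h => hz (by simpa [h] using (eval_θ 1 d).symm)
  have hMθ : (M.map (algebraMap F (MvPolynomial σ F))).map θ =
      (M.map (algebraMap F L)).map C := by
    simp only [map_map]
    congr
    ext a
    simp
  have hNθ := hN.map (θ : MvPolynomial σ F →+* L[X])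
  rw [AlgHom.coe_toRingHom, hMθ] at hNθ
  obtain ⟨w, hw⟩ := exists_toQuadraticForm'_eq_eval_zero hM hθd
    (f := N.map θ *ᵥ (C ∘ v)) (p := θ c * C ((M.map (algebraMap F L)).toQuadraticForm' v)) <| by
    rw [hNθ.toQuadraticForm'_mulVec, ← RingHom.map_toQuadraticForm', map_mul, map_pow, mul_assoc]
  refine ⟨w, ?_⟩
  rw [hw, eval_mul, eval_C, eval_θ]
  simp

lemma exists_toQuadraticForm'_eq_aeval_mul {E : Type*} [Field E] [Algebra F E]
    (hM : (M.map (algebraMap F E)).toQuadraticForm'.Anisotropic) (hd : d ≠ 0)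
    (hN : (M.map (algebraMap F (MvPolynomial σ F))).IsSimilitude N (d ^ 2 * c))
    (u : σ → E) (v : n → E) :
    ∃ w, (M.map (algebraMap F E)).toQuadraticForm' w =
      MvPolynomial.aeval u c * (M.map (algebraMap F E)).toQuadraticForm' v := by
  have hM' : (M.map (algebraMap F (RatFunc E))).toQuadraticForm'.Anisotropic := by
    rw [IsScalarTower.algebraMap_eq F E (RatFunc E), RingHom.coe_comp, ← map_map]
    exact anisotropic_toQuadraticForm'_map_ratFunc hM
  have : Infinite (RatFunc E) := .of_injective _ (IsFractionRing.injective E[X] (RatFunc E))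
  obtain ⟨w, hw⟩ := exists_toQuadraticForm'_eq_aeval_mul_of_infinite hM' hd hN
    (algebraMap E (RatFunc E) ∘ u) (algebraMap E (RatFunc E) ∘ v)
  rw [IsScalarTower.algebraMap_eq F E (RatFunc E), RingHom.coe_comp, ← map_map,
    ← RingHom.map_toQuadraticForm', MvPolynomial.aeval_algebraMap_apply, ← map_mul] at hw
  exact exists_toQuadraticForm'_eq_of_map_ratFunc hM hw

end Specialization

end Matrix

/-- If a quadratic form `φ` of dimension `m` over `F` admits, over `K = F(X₁,…,Xₘ)`, a
`K`-linear map `T` with `φ(T Y) = φ(X₁,…,Xₘ)·φ(Y)`, then `φ` is strictly multiplicative: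
over every field extension `E/F`, for all `u, v ∈ E^m` there is `w ∈ E^m` with
`φ(u)·φ(v) = φ(w)`. -/
theorem stmt_9 (F : Type*) [Field F] (h2 : (1 : F) + 1 ≠ 0)
    (m : ℕ) (M : Matrix (Fin m) (Fin m) F) (hsymm : M.IsSymm) (hnd : M.det ≠ 0)
    (hT : ∃ T : (Fin m → FractionRing (MvPolynomial (Fin m) F)) →ₗ[FractionRing (MvPolynomial (Fin m) F)]
            (Fin m → FractionRing (MvPolynomial (Fin m) F)),
      ∀ Y : Fin m → FractionRing (MvPolynomial (Fin m) F),
        formVal (algebraMap F (FractionRing (MvPolynomial (Fin m) F))) M (T Y) =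
          formVal (algebraMap F (FractionRing (MvPolynomial (Fin m) F))) M
              (fun i => algebraMap (MvPolynomial (Fin m) F)
                (FractionRing (MvPolynomial (Fin m) F)) (MvPolynomial.X i)) *
            formVal (algebraMap F (FractionRing (MvPolynomial (Fin m) F))) M Y) :
    ∀ (E : Type*) [Field E] [Algebra F E] (u v : Fin m → E),
      ∃ w : Fin m → E,
        formVal (algebraMap F E) M u * formVal (algebraMap F E) M v =
          formVal (algebraMap F E) M w := by
  set R := MvPolynomial (Fin m) F
  set K := FractionRing R
  set MR := M.map (algebraMap F R)
  rw [one_add_one_eq_two] at h2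
  obtain ⟨T, hT⟩ := hT
  obtain ⟨d, hd, N, hN⟩ := (hsymm.map (algebraMap F R)).exists_isSimilitude_of_linearMap
    (K := K) (c := MR.toQuadraticForm' MvPolynomial.X)
    (by rw [← map_ofNat (algebraMap F K) 2]; exact (map_ne_zero _).mpr h2) T fun Y => by
      rw [RingHom.map_toQuadraticForm', map_map, ← RingHom.coe_comp,
        ← IsScalarTower.algebraMap_eq, Function.comp_def]
      simpa only [formVal_eq_toQuadraticForm'] using hT Y
  intro E _ _ u v
  simp only [formVal_eq_toQuadraticForm']
  by_cases hiso : (M.map (algebraMap F E)).toQuadraticForm'.Anisotropic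
  · obtain ⟨w, hw⟩ := exists_toQuadraticForm'_eq_aeval_mul hiso hd hN u v
    rw [aeval_toQuadraticForm'_X] at hw
    exact ⟨w, hw.symm⟩
  · obtain ⟨w, hw⟩ := (hsymm.map (algebraMap F E)).toQuadraticForm'_surjective
      (by rw [← map_ofNat (algebraMap F E) 2]; exact (map_ne_zero _).mpr h2)
      (by rw [← RingHom.mapMatrix_apply, ← RingHom.map_det]; exact (map_ne_zero _).mpr hnd) hiso
      ((M.map (algebraMap F E)).toQuadraticForm' u * (M.map (algebraMap F E)).toQuadraticForm' v)
    exact ⟨w, hw.symm⟩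
end

section
/- Let F be a field of characteristic not 2 and φ = ⟨1,a₁⟩⊗⋯⊗⟨1,aₙ⟩ an anisotropic n-fold Pfister form over F. For every field extension E/F, the set of nonzero values D_E(φ) = {φ(v) : v ∈ E^{2ⁿ}, φ(v) ≠ 0} is a subgroup of E^×. -/
/-!
Writing `φₙ₊₁ = φₙ ⊥ aₙ₊₁ φₙ`, one shows by induction on `n` that every value `b` of `φₙ` is a
similarity factor: there is a map `T` with `φₙ (T v) = b φₙ v`. A value of `φₙ₊₁` is
`x + a y` with `x`, `y` values of `φₙ`. If `x = 0` it is `a · y`, where `a` is a factor of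
`φₙ₊₁` (swap the halves) and `y` one of `φₙ`, hence of `φₙ₊₁`. Otherwise it is `x (1 + a d)`
with `d = y / x` a factor of `φₙ`, and `1 + a d` is a factor of `φₙ₊₁` by the identity
`φ(p - e w) + e φ(p + w) = (1 + e)(φ p + e φ w)`. Products of values are then values, and
`u⁻¹ = u · (u⁻¹)²` is a value whenever `u` is.
-/

namespace Pfister

variable {K : Type*} [Field K] (a : ℕ → K)

lemma pfisterVal_congr : ∀ n {v w : ℕ → K}, (∀ j < 2 ^ n, v j = w j) →
    pfisterVal a n v = pfisterVal a n w
  | 0, v, w, h => by simp only [pfisterVal, h 0 (by norm_num)]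
  | n + 1, v, w, h => by
    have hpow : 2 ^ (n + 1) = 2 ^ n + 2 ^ n := by rw [pow_succ]; ring
    simp only [pfisterVal]
    rw [pfisterVal_congr n fun j hj => h j (by omega),
      pfisterVal_congr n fun j hj => h (2 ^ n + j) (by omega)]

lemma pfisterVal_mul_left : ∀ n (c : K) (v : ℕ → K),
    pfisterVal a n (fun j => c * v j) = c ^ 2 * pfisterVal a n v
  | 0, c, v => by simp only [pfisterVal]; ring
  | n + 1, c, v => by simp only [pfisterVal, pfisterVal_mul_left n c]; ring

lemma pfisterVal_sub_mul_add_mul_add : ∀ n (e : K) (x y : ℕ → K),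
    pfisterVal a n (fun j => x j - e * y j) + e * pfisterVal a n (fun j => x j + y j)
      = (1 + e) * (pfisterVal a n x + e * pfisterVal a n y)
  | 0, e, x, y => by simp only [pfisterVal]; ring
  | n + 1, e, x, y => by
    simp only [pfisterVal]
    linear_combination pfisterVal_sub_mul_add_mul_add n e x y +
      a (n + 1) * pfisterVal_sub_mul_add_mul_add n e (fun j => x (2 ^ n + j))
        (fun j => y (2 ^ n + j))

lemma pfisterVal_indicator_zero (n : ℕ) :
    pfisterVal a n (fun j => if j = 0 then (1 : K) else 0) = 1 := by
  induction n with
  | zero => simp [pfisterVal]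
  | succ n ih =>
    have hshift : pfisterVal a n (fun j => if 2 ^ n + j = 0 then (1 : K) else 0) = 0 := by
      simpa [Nat.pos_iff_ne_zero.mp (Nat.two_pow_pos n)] using
        pfisterVal_mul_left a n 0 (fun _ => 0)
    simp only [pfisterVal, ih, hshift, mul_zero, add_zero]

def glue (n : ℕ) (p q : ℕ → K) : ℕ → K :=
  fun j => if j < 2 ^ n then p j else q (j - 2 ^ n)

lemma pfisterVal_succ_glue (n : ℕ) (p q : ℕ → K) :
    pfisterVal a (n + 1) (glue n p q) = pfisterVal a n p + a (n + 1) * pfisterVal a n q := by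
  have hfirst : pfisterVal a n (glue n p q) = pfisterVal a n p :=
    pfisterVal_congr a n fun j hj => by simp [glue, hj]
  have hsecond : (fun j => glue n p q (2 ^ n + j)) = q := by
    funext j
    simp [glue]
  simp only [pfisterVal, hfirst, hsecond]

/-- The map `T` need not be linear: only values of `φ` matter for the argument. -/
def IsSimilarityFactor (n : ℕ) (c : K) : Prop :=
  ∃ T : (ℕ → K) → ℕ → K, ∀ v, pfisterVal a n (T v) = c * pfisterVal a n v

variable {a}

lemma isSimilarityFactor_one (n : ℕ) : IsSimilarityFactor a n 1 :=
  ⟨id, fun _ => (one_mul _).symm⟩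

lemma isSimilarityFactor_sq (n : ℕ) (c : K) : IsSimilarityFactor a n (c ^ 2) :=
  ⟨fun v j => c * v j, fun v => pfisterVal_mul_left a n c v⟩

lemma IsSimilarityFactor.mul {n : ℕ} {c d : K} (hc : IsSimilarityFactor a n c)
    (hd : IsSimilarityFactor a n d) : IsSimilarityFactor a n (c * d) := by
  obtain ⟨C, hC⟩ := hc
  obtain ⟨D, hD⟩ := hd
  exact ⟨C ∘ D, fun v => by simp only [Function.comp_apply, hC, hD, mul_assoc]⟩

lemma IsSimilarityFactor.inv {n : ℕ} {c : K} (hc : IsSimilarityFactor a n c) :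
    IsSimilarityFactor a n c⁻¹ := by
  have hinv : c⁻¹ = c * c⁻¹ ^ 2 := by
    rcases eq_or_ne c 0 with rfl | hc0
    · simp
    · field_simp
  rw [hinv]
  exact hc.mul (isSimilarityFactor_sq n _)

lemma IsSimilarityFactor.succ {n : ℕ} {c : K} (hc : IsSimilarityFactor a n c) :
    IsSimilarityFactor a (n + 1) c := by
  obtain ⟨T, hT⟩ := hc
  refine ⟨fun v => glue n (T v) (T fun j => v (2 ^ n + j)), fun v => ?_⟩
  rw [pfisterVal_succ_glue, hT, hT, pfisterVal]
  ring

lemma isSimilarityFactor_succ_coeff (n : ℕ) : IsSimilarityFactor a (n + 1) (a (n + 1)) := by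
  refine ⟨fun v => glue n (fun j => a (n + 1) * v (2 ^ n + j)) v, fun v => ?_⟩
  rw [pfisterVal_succ_glue, pfisterVal_mul_left, pfisterVal]
  ring

lemma IsSimilarityFactor.one_add_coeff_mul {n : ℕ} {d : K} (hd : IsSimilarityFactor a n d) :
    IsSimilarityFactor a (n + 1) (1 + a (n + 1) * d) := by
  rcases eq_or_ne d 0 with rfl | hd0
  · simpa using isSimilarityFactor_one (a := a) (n + 1)
  obtain ⟨D, hD⟩ := hd
  obtain ⟨D', hD'⟩ := IsSimilarityFactor.inv ⟨D, hD⟩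
  set e := a (n + 1) * d
  -- With `w := D' q`, so that `e φ w = a φ q`, the key identity gives the map
  -- `(p, q) ↦ (p - e w, D (p + w))`.
  refine ⟨fun v =>
    glue n (fun j => v j - e * D' (fun i => v (2 ^ n + i)) j)
      (D fun j => v j + D' (fun i => v (2 ^ n + i)) j), fun v => ?_⟩
  have hew : e * pfisterVal a n (D' fun i => v (2 ^ n + i))
      = a (n + 1) * pfisterVal a n (fun i => v (2 ^ n + i)) := by
    rw [hD', ← mul_assoc, mul_assoc (a (n + 1)), mul_inv_cancel₀ hd0, mul_one]
  rw [pfisterVal_succ_glue, hD, ← mul_assoc, pfisterVal_sub_mul_add_mul_add, hew, pfisterVal]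

theorem isSimilarityFactor_pfisterVal :
    ∀ n (v : ℕ → K), IsSimilarityFactor a n (pfisterVal a n v)
  | 0, v => isSimilarityFactor_sq 0 (v 0)
  | n + 1, v => by
    set x := pfisterVal a n v
    set y := pfisterVal a n fun j => v (2 ^ n + j)
    have hx : IsSimilarityFactor a n x := isSimilarityFactor_pfisterVal n _
    have hy : IsSimilarityFactor a n y := isSimilarityFactor_pfisterVal n _
    show IsSimilarityFactor a (n + 1) (x + a (n + 1) * y)
    rcases eq_or_ne x 0 with hx0 | hx0
    · rw [hx0, zero_add]
      exact (isSimilarityFactor_succ_coeff n).mul hy.succ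
    · have hsplit : x + a (n + 1) * y = x * (1 + a (n + 1) * (y * x⁻¹)) := by
        field_simp
      rw [hsplit]
      exact hx.succ.mul (hy.mul hx.inv).one_add_coeff_mul

variable (a) in
def valueGroup (n : ℕ) : Subgroup Kˣ where
  carrier := {u | (u : K) ∈ Set.range (pfisterVal a n)}
  one_mem' := ⟨_, pfisterVal_indicator_zero a n⟩
  mul_mem' := by
    rintro u w ⟨v, hv⟩ ⟨v', hv'⟩
    obtain ⟨T, hT⟩ := isSimilarityFactor_pfisterVal n v
    exact ⟨T v', by rw [hT, hv, hv', Units.val_mul]⟩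
  inv_mem' := by
    rintro u ⟨v, hv⟩
    obtain ⟨T, hT⟩ := (isSimilarityFactor_pfisterVal n v).inv
    exact ⟨T (fun j => if j = 0 then 1 else 0), by
      rw [hT, pfisterVal_indicator_zero, hv, mul_one, Units.val_inv_eq_inv_val]⟩

variable (a) in
lemma exists_fin_pfisterVal_eq_iff (n : ℕ) (c : K) :
    (∃ v : Fin (2 ^ n) → K, pfisterVal a n (fun j => if h : j < 2 ^ n then v ⟨j, h⟩ else 0) = c)
      ↔ c ∈ Set.range (pfisterVal a n) := by
  refine ⟨fun ⟨v, hv⟩ => ⟨_, hv⟩, fun ⟨w, hw⟩ => ⟨fun i => w i, ?_⟩⟩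
  rw [← hw]
  exact pfisterVal_congr a n fun j hj => by simp [hj]

end Pfister

open Pfister in
theorem stmt_16_general (F : Type*) [Field F]
    (n : ℕ) (a : ℕ → F)
    (E : Type*) [Field E] [Algebra F E] :
    let φE : (Fin (2 ^ n) → E) → E := fun v =>
      pfisterVal (fun i => algebraMap F E (a i)) n
        (fun j => if h : j < 2 ^ n then v ⟨j, h⟩ else 0)
    (∃ v, φE v = ((1 : Eˣ) : E)) ∧
    (∀ u w : Eˣ, (∃ v, φE v = (u : E)) → (∃ v, φE v = (w : E)) →
      ∃ v, φE v = ((u * w : Eˣ) : E)) ∧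
    (∀ u : Eˣ, (∃ v, φE v = (u : E)) → ∃ v, φE v = ((u⁻¹ : Eˣ) : E)) := by
  intro φE
  let G := valueGroup (fun i => algebraMap F E (a i)) n
  simp only [φE, exists_fin_pfisterVal_eq_iff]
  exact ⟨G.one_mem, fun u w => G.mul_mem, fun u => G.inv_mem⟩

/-- For an anisotropic `n`-fold Pfister form `φ` over `F` and any field extension `E/F`,
the set of nonzero values of `φ` over `E` is a subgroup of `Eˣ`: it contains `1` and is
closed under multiplication and inversion. -/
theorem stmt_16 (F : Type*) [Field F] (h2 : (1 : F) + 1 ≠ 0)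
    (n : ℕ) (a : ℕ → F) (ha : ∀ i, 1 ≤ i → i ≤ n → a i ≠ 0)
    (haniso : ∀ v : Fin (2 ^ n) → F,
      pfisterVal a n (fun j => if h : j < 2 ^ n then v ⟨j, h⟩ else 0) = 0 → v = 0)
    (E : Type*) [Field E] [Algebra F E] :
    let φE : (Fin (2 ^ n) → E) → E := fun v =>
      pfisterVal (fun i => algebraMap F E (a i)) n
        (fun j => if h : j < 2 ^ n then v ⟨j, h⟩ else 0)
    (∃ v, φE v = ((1 : Eˣ) : E)) ∧
    (∀ u w : Eˣ, (∃ v, φE v = (u : E)) → (∃ v, φE v = (w : E)) →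
      ∃ v, φE v = ((u * w : Eˣ) : E)) ∧
    (∀ u : Eˣ, (∃ v, φE v = (u : E)) → ∃ v, φE v = ((u⁻¹ : Eˣ) : E)) :=
  stmt_16_general F n a E
end
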